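/- Let t0 < T, θ ∈ (0,1), 0 < μ < 1, γ > 0, b > 0, x0 ∈ ℝ, and let f : [t0,T] × ℝ → ℝ be continuous and satisfy |f(t,y1) − f(t,y2)| ≤ A|y1 − y2| for all t ∈ [t0,T] and y1, y2 ∈ ℝ, with A > 0. Define (Υx)(t) = x0 + (I^{θ,μ,γ}(f(·, x(·))))(t) for continuous x : [t0,T] → ℝ. Then for all continuous x1, x2 : [t0,T] → ℝ and all t ∈ [t0,T], |(Υx1)(t) − (Υx2)(t)| ≤ C1(T,A) · sup_{s ∈ [t0,T]} |x1(s) − x2(s)|. -/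

import Mathlib

open Real MeasureTheory Set

/-- Generalized binomial coefficient `C(γ, i) = γ(γ-1)⋯(γ-i+1)/i!`. -/
noncomputable def genBinom (γ : ℝ) (i : ℕ) : ℝ :=
  (∏ j ∈ Finset.range i, (γ - j)) / (Nat.factorial i : ℝ)

/-- Rising factorial `(ρ)_k = ρ(ρ+1)⋯(ρ+k-1)`. -/
noncomputable def risingFac (ρ : ℝ) (k : ℕ) : ℝ :=
  ∏ j ∈ Finset.range k, (ρ + j)

/-- Generalized Mittag-Leffler function `E_{θ,β}^ρ(λ, z)`
(terms with `Γ` at a pole vanish since `Real.Gamma` is `0` there). -/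
noncomputable def mittagLeffler (θ β ρ lam z : ℝ) : ℝ :=
  ∑' k : ℕ, lam ^ k * z ^ ((k : ℝ) * θ + β - 1) * risingFac ρ k /
    (Real.Gamma ((k : ℝ) * θ + β) * (Nat.factorial k : ℝ))

/-- Generalized AB fractional integral `(I^{θ,μ,γ} η)(t)` starting at `t0`,
with normalization constant `b = B(θ) > 0`. -/
noncomputable def ABIntegral (t0 b θ μ γ : ℝ) (η : ℝ → ℝ) (t : ℝ) : ℝ :=
  ∑' i : ℕ, genBinom γ i * θ ^ i /
      (b * (1 - θ) ^ ((i : ℝ) - 1) * Real.Gamma ((i : ℝ) * θ + 1 - μ)) *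
    ∫ s in t0..t, (t - s) ^ ((i : ℝ) * θ - μ) * η s

/-- Generalized ABC fractional derivative `(D^{θ,μ,γ} f)(t)` starting at `t0`,
with `λ = -θ/(1-θ)` and normalization constant `b = B(θ) > 0`. -/
noncomputable def ABCDeriv (t0 b θ μ γ : ℝ) (f : ℝ → ℝ) (t : ℝ) : ℝ :=
  (b / (1 - θ)) * ∫ s in t0..t, mittagLeffler θ μ γ (-θ / (1 - θ)) (t - s) * deriv f s

/-- Generalized ABR fractional derivative `(R^{θ,μ,γ} f)(t)` starting at `t0`. -/
noncomputable def ABRDeriv (t0 b θ μ γ : ℝ) (f : ℝ → ℝ) (t : ℝ) : ℝ :=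
  (b / (1 - θ)) *
    deriv (fun u => ∫ s in t0..u, mittagLeffler θ μ γ (-θ / (1 - θ)) (u - s) * f s) t

/-- The contraction constant `C1(T, A)` (case `μ ≠ 1`). -/
noncomputable def C1const (t0 T b θ μ γ A : ℝ) : ℝ :=
  (A / b) * ∑' i : ℕ, |genBinom γ i| * θ ^ i * (T - t0) ^ ((i : ℝ) * θ + 1 - μ) /
    ((1 - θ) ^ ((i : ℝ) - 1) * Real.Gamma ((i : ℝ) * θ + 2 - μ))

/-- The contraction constant `C2(T, A)` (case `μ = 1`). -/
noncomputable def C2const (t0 T b θ γ A : ℝ) : ℝ :=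
  (A / b) * ((1 - θ) +
    ∑' i : ℕ, |genBinom γ (i + 1)| * θ ^ (i + 1) * (T - t0) ^ (((i : ℝ) + 1) * θ) /
      ((1 - θ) ^ (i : ℕ) * Real.Gamma (((i : ℝ) + 1) * θ + 1)))

/-- The operator `Υ` in the case `μ = 1`, whose `i = 0` term reduces to `((1-θ)/b) f(t, x(t))`. -/
noncomputable def UpsilonMuOne (t0 b θ γ x0 : ℝ) (f : ℝ → ℝ → ℝ) (x : ℝ → ℝ) (t : ℝ) : ℝ :=
  x0 + ((1 - θ) / b) * f t (x t) +
    ∑' i : ℕ, genBinom γ (i + 1) * θ ^ (i + 1) /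
        (b * (1 - θ) ^ (i : ℕ) * Real.Gamma (((i : ℝ) + 1) * θ)) *
      ∫ s in t0..t, (t - s) ^ (((i : ℝ) + 1) * θ - 1) * f s (x s)

/-! The difference `Υx₁ - Υx₂` is the AB integral of `g = f(·, x₁) - f(·, x₂)`, and
`|g| ≤ A · sup |x₁ - x₂|`. Bounding `|g|` inside each term and integrating the kernel
`(t - s)^(iθ - μ)` exactly gives the `i`-th summand of `C1`, by `Γ(x + 1) = x Γ(x)`. The series
of these summands converges because `|C(γ, i)| ≤ (1 + |γ|)^i` and, from the Euler integral,
`Γ(s) ≥ c^(s-1) e^(-c)` for every `c > 0` and `s ≥ 1`: given `K`, choosing `c^θ > K` makes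
`K^i / Γ(iθ + d)` decay geometrically. -/

lemma rpow_mul_exp_neg_le_Gamma {s c : ℝ} (hs : 1 ≤ s) (hc : 0 < c) :
    c ^ (s - 1) * exp (-c) ≤ Gamma s := by
  have hint := GammaIntegral_convergent (by linarith : 0 < s)
  calc c ^ (s - 1) * exp (-c) = ∫ x in Ioi c, exp (-x) * c ^ (s - 1) := by
        rw [integral_mul_const, integral_exp_neg_Ioi, mul_comm]
    _ ≤ ∫ x in Ioi c, exp (-x) * x ^ (s - 1) := by
        refine setIntegral_mono_on ((integrableOn_exp_neg_Ioi c).mul_const _)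
          (hint.mono_set (Ioi_subset_Ioi hc.le)) measurableSet_Ioi fun x hx => ?_
        have hcx : c ≤ x := hx.le
        gcongr
    _ ≤ ∫ x in Ioi 0, exp (-x) * x ^ (s - 1) :=
        setIntegral_mono_set hint
          (ae_restrict_of_forall_mem measurableSet_Ioi fun x (hx : 0 < x) => by positivity)
          (Ioi_subset_Ioi hc.le).eventuallyLE
    _ = Gamma s := (Gamma_eq_integral (by linarith)).symm

lemma summable_pow_div_Gamma {K θ d : ℝ} (hK : 0 ≤ K) (hθ : 0 < θ) (hd : 1 ≤ d) :
    Summable fun i : ℕ => K ^ i / Gamma (i * θ + d) := by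
  set c := (2 * K + 1) ^ θ⁻¹
  have hc : 0 < c := by positivity
  have hcθ : c ^ θ = 2 * K + 1 := by
    rw [← rpow_mul (by positivity), inv_mul_cancel₀ hθ.ne', rpow_one]
  have hr : K / (2 * K + 1) < 1 := by rw [div_lt_one (by positivity)]; linarith
  refine Summable.of_nonneg_of_le (fun i => ?_) (fun i => ?_)
    ((summable_geometric_of_lt_one (by positivity) hr).mul_left (c ^ (d - 1) * exp (-c))⁻¹)
  · have := Gamma_pos_of_pos (by positivity : 0 < (i : ℝ) * θ + d)
    positivity
  · have hΓ := rpow_mul_exp_neg_le_Gamma (by nlinarith [(i.cast_nonneg : (0 : ℝ) ≤ i)] :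
      1 ≤ (i : ℝ) * θ + d) hc
    have hpow : c ^ ((i : ℝ) * θ + d - 1) = (2 * K + 1) ^ i * c ^ (d - 1) := by
      rw [add_sub_assoc, rpow_add hc, mul_comm (i : ℝ), rpow_mul hc.le, hcθ, rpow_natCast]
    rw [hpow] at hΓ
    calc K ^ i / Gamma (i * θ + d)
        ≤ K ^ i / ((2 * K + 1) ^ i * c ^ (d - 1) * exp (-c)) := by gcongr
      _ = (c ^ (d - 1) * exp (-c))⁻¹ * (K / (2 * K + 1)) ^ i := by
          rw [div_pow]; field_simp

lemma abs_genBinom_le (γ : ℝ) (i : ℕ) : |genBinom γ i| ≤ (1 + |γ|) ^ i := by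
  have hfac : (i.factorial : ℝ) = ∏ j ∈ Finset.range i, ((j : ℝ) + 1) := by
    rw [← Finset.prod_range_add_one_eq_factorial]; push_cast; rfl
  rw [genBinom, abs_div, Finset.abs_prod, Nat.abs_cast, div_le_iff₀ (by positivity), hfac,
    show (1 + |γ|) ^ i = ∏ _j ∈ Finset.range i, (1 + |γ|) by simp, ← Finset.prod_mul_distrib]
  refine Finset.prod_le_prod (fun j _ => abs_nonneg _) fun j _ => ?_
  have hj : (0 : ℝ) ≤ j := j.cast_nonneg
  calc |γ - j| ≤ |γ| + j := (abs_sub _ _).trans_eq (by rw [abs_of_nonneg hj])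
    _ ≤ (1 + |γ|) * (j + 1) := by nlinarith [abs_nonneg γ]

noncomputable def C1term (θ μ γ R : ℝ) (i : ℕ) : ℝ :=
  |genBinom γ i| * θ ^ i * R ^ ((i : ℝ) * θ + 1 - μ) /
    ((1 - θ) ^ ((i : ℝ) - 1) * Gamma ((i : ℝ) * θ + 2 - μ))

lemma summable_C1term {θ μ γ R : ℝ} (hθ0 : 0 < θ) (hθ1 : θ < 1) (hμ1 : μ < 1) (hR : 0 ≤ R) :
    Summable (C1term θ μ γ R) := by
  have h1θ : 0 < 1 - θ := by linarith
  set K := (1 + |γ|) * (θ * R ^ θ / (1 - θ))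
  have hK := summable_pow_div_Gamma (K := K) (d := 2 - μ) (by positivity) hθ0 (by linarith)
  refine Summable.of_nonneg_of_le (fun i => ?_) (fun i => ?_)
    (hK.mul_left ((1 - θ) * R ^ (1 - μ)))
  all_goals have hΓ : 0 < Gamma ((i : ℝ) * θ + (2 - μ)) :=
    Gamma_pos_of_pos (by nlinarith [(i.cast_nonneg : (0 : ℝ) ≤ i)])
  · rw [C1term, ← add_sub_assoc] at *
    positivity
  · have hRpow : R ^ ((i : ℝ) * θ + 1 - μ) = (R ^ θ) ^ i * R ^ (1 - μ) := by
      rw [add_sub_assoc, rpow_add' hR (by positivity), mul_comm (i : ℝ), rpow_mul hR,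
        rpow_natCast]
    have h1θpow : (1 - θ) ^ ((i : ℝ) - 1) = (1 - θ) ^ i / (1 - θ) := by
      rw [rpow_sub h1θ, rpow_one, rpow_natCast]
    rw [← add_sub_assoc] at hΓ ⊢
    calc C1term θ μ γ R i
        = (1 - θ) * R ^ (1 - μ) * (|genBinom γ i| * (θ * R ^ θ / (1 - θ)) ^ i /
            Gamma ((i : ℝ) * θ + 2 - μ)) := by
          rw [C1term, hRpow, h1θpow, div_pow, mul_pow]; field_simp
      _ ≤ (1 - θ) * R ^ (1 - μ) * (K ^ i / Gamma ((i : ℝ) * θ + 2 - μ)) := by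
          rw [mul_pow]; gcongr; exact abs_genBinom_le γ i

lemma intervalIntegrable_sub_rpow_mul {t0 t a : ℝ} (ha : -1 < a) {g : ℝ → ℝ}
    (hg : ContinuousOn g (uIcc t0 t)) :
    IntervalIntegrable (fun s => (t - s) ^ a * g s) volume t0 t := by
  refine IntervalIntegrable.mul_continuousOn ?_ hg
  simpa using
    (intervalIntegral.intervalIntegrable_rpow' ha (a := t - t0) (b := t - t)).comp_sub_left t

lemma integral_sub_rpow {t0 t a : ℝ} (ha : -1 < a) :
    ∫ s in t0..t, (t - s) ^ a = (t - t0) ^ (a + 1) / (a + 1) := by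
  rw [intervalIntegral.integral_comp_sub_left (fun u => u ^ a) t, sub_self,
    integral_rpow (Or.inl ha), zero_rpow (by linarith : a + 1 ≠ 0), sub_zero]

lemma abs_integral_sub_rpow_mul_le {t0 t a B : ℝ} (ht : t0 ≤ t) (ha : -1 < a) {g : ℝ → ℝ}
    (hg : ContinuousOn g (Icc t0 t)) (hB : ∀ s ∈ Icc t0 t, |g s| ≤ B) :
    |∫ s in t0..t, (t - s) ^ a * g s| ≤ B * ((t - t0) ^ (a + 1) / (a + 1)) := by
  rw [← uIcc_of_le ht] at hg
  calc |∫ s in t0..t, (t - s) ^ a * g s| ≤ ∫ s in t0..t, |(t - s) ^ a * g s| :=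
        intervalIntegral.abs_integral_le_integral_abs ht
    _ ≤ ∫ s in t0..t, (t - s) ^ a * B := by
        refine intervalIntegral.integral_mono_on ht (intervalIntegrable_sub_rpow_mul ha hg).abs
          (intervalIntegrable_sub_rpow_mul ha continuousOn_const) fun s hs => ?_
        have hts : 0 ≤ t - s := by linarith [hs.2]
        rw [abs_mul, abs_of_nonneg (rpow_nonneg hts a)]
        exact mul_le_mul_of_nonneg_left (hB s hs) (rpow_nonneg hts a)
    _ = B * ((t - t0) ^ (a + 1) / (a + 1)) := by
        rw [intervalIntegral.integral_mul_const, integral_sub_rpow ha, mul_comm]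

noncomputable def ABCoeff (b θ μ γ : ℝ) (i : ℕ) : ℝ :=
  genBinom γ i * θ ^ i / (b * (1 - θ) ^ ((i : ℝ) - 1) * Gamma ((i : ℝ) * θ + 1 - μ))

noncomputable def ABTerm (t0 b θ μ γ : ℝ) (η : ℝ → ℝ) (t : ℝ) (i : ℕ) : ℝ :=
  ABCoeff b θ μ γ i * ∫ s in t0..t, (t - s) ^ ((i : ℝ) * θ - μ) * η s

lemma ABIntegral_eq_tsum_ABTerm (t0 b θ μ γ : ℝ) (η : ℝ → ℝ) (t : ℝ) :
    ABIntegral t0 b θ μ γ η t = ∑' i, ABTerm t0 b θ μ γ η t i := rfl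

/-- `Γ(x + 1) = x Γ(x)` turns the integral of the kernel into the summand of `C1const`. -/
lemma abs_ABCoeff_mul_eq {b θ μ γ R : ℝ} (hb : 0 < b) (hθ0 : 0 ≤ θ) (hθ1 : θ < 1) (hμ1 : μ < 1)
    (i : ℕ) :
    |ABCoeff b θ μ γ i| * (R ^ ((i : ℝ) * θ - μ + 1) / ((i : ℝ) * θ - μ + 1)) =
      C1term θ μ γ R i / b := by
  have hx : 0 < (i : ℝ) * θ + 1 - μ := by nlinarith [(i.cast_nonneg : (0 : ℝ) ≤ i)]
  have hΓ := Gamma_pos_of_pos hx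
  have h1θ : 0 < (1 - θ) ^ ((i : ℝ) - 1) := rpow_pos_of_pos (by linarith) _
  rw [ABCoeff, C1term, show (i : ℝ) * θ + 2 - μ = (i * θ + 1 - μ) + 1 by ring,
    Gamma_add_one hx.ne', show (i : ℝ) * θ - μ + 1 = i * θ + 1 - μ by ring, abs_div, abs_mul,
    abs_of_nonneg (pow_nonneg hθ0 i), abs_of_pos (by positivity : 0 < b * _ * Gamma _)]
  field_simp

section ABIntegralBounds

variable {t0 t T b θ μ γ B : ℝ} {η : ℝ → ℝ}

lemma abs_ABTerm_le (hb : 0 < b) (hθ0 : 0 ≤ θ) (hθ1 : θ < 1) (hμ1 : μ < 1)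
    (ht0 : t0 ≤ t) (htT : t ≤ T) (hη : ContinuousOn η (Icc t0 t))
    (hB : ∀ s ∈ Icc t0 t, |η s| ≤ B) (i : ℕ) :
    |ABTerm t0 b θ μ γ η t i| ≤ B / b * C1term θ μ γ (T - t0) i := by
  have ha : -1 < (i : ℝ) * θ - μ := by nlinarith [(i.cast_nonneg : (0 : ℝ) ≤ i)]
  have hB0 : 0 ≤ B := (abs_nonneg _).trans (hB t0 ⟨le_rfl, ht0⟩)
  calc |ABTerm t0 b θ μ γ η t i|
      ≤ |ABCoeff b θ μ γ i| * (B * ((t - t0) ^ ((i : ℝ) * θ - μ + 1) / ((i : ℝ) * θ - μ + 1))) := by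
        rw [ABTerm, abs_mul]
        gcongr
        exact abs_integral_sub_rpow_mul_le ht0 ha hη hB
    _ ≤ |ABCoeff b θ μ γ i| * (B * ((T - t0) ^ ((i : ℝ) * θ - μ + 1) / ((i : ℝ) * θ - μ + 1))) := by
        gcongr <;> linarith
    _ = B / b * C1term θ μ γ (T - t0) i := by
        rw [mul_left_comm, abs_ABCoeff_mul_eq hb hθ0 hθ1 hμ1]; ring

lemma summable_ABTerm (hb : 0 < b) (hθ0 : 0 < θ) (hθ1 : θ < 1) (hμ1 : μ < 1)
    (ht0 : t0 ≤ t) (hη : ContinuousOn η (Icc t0 t)) : Summable (ABTerm t0 b θ μ γ η t) := by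
  obtain ⟨B, hB⟩ := isCompact_Icc.exists_bound_of_continuousOn hη
  exact .of_norm_bounded ((summable_C1term hθ0 hθ1 hμ1 (sub_nonneg.2 ht0)).mul_left (B / b))
    (abs_ABTerm_le hb hθ0.le hθ1 hμ1 ht0 le_rfl hη hB)

lemma ABIntegral_sub (hb : 0 < b) (hθ0 : 0 < θ) (hθ1 : θ < 1) (hμ1 : μ < 1) (ht0 : t0 ≤ t)
    {η₁ η₂ : ℝ → ℝ} (hη₁ : ContinuousOn η₁ (Icc t0 t)) (hη₂ : ContinuousOn η₂ (Icc t0 t)) :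
    ABIntegral t0 b θ μ γ η₁ t - ABIntegral t0 b θ μ γ η₂ t =
      ABIntegral t0 b θ μ γ (fun s => η₁ s - η₂ s) t := by
  have hint : ∀ {η : ℝ → ℝ}, ContinuousOn η (Icc t0 t) → ∀ i : ℕ,
      IntervalIntegrable (fun s => (t - s) ^ ((i : ℝ) * θ - μ) * η s) volume t0 t :=
    fun hη i => intervalIntegrable_sub_rpow_mul (by nlinarith [(i.cast_nonneg : (0 : ℝ) ≤ i)])
      (by rwa [uIcc_of_le ht0])
  simp only [ABIntegral_eq_tsum_ABTerm]
  rw [← (summable_ABTerm hb hθ0 hθ1 hμ1 ht0 hη₁).tsum_sub (summable_ABTerm hb hθ0 hθ1 hμ1 ht0 hη₂)]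
  congr 1 with i
  simp only [ABTerm, mul_sub]
  rw [← mul_sub, ← intervalIntegral.integral_sub (hint hη₁ i) (hint hη₂ i)]

lemma abs_ABIntegral_le (hb : 0 < b) (hθ0 : 0 < θ) (hθ1 : θ < 1) (hμ1 : μ < 1)
    (ht0 : t0 ≤ t) (htT : t ≤ T) (hη : ContinuousOn η (Icc t0 t))
    (hB : ∀ s ∈ Icc t0 t, |η s| ≤ B) :
    |ABIntegral t0 b θ μ γ η t| ≤ C1const t0 T b θ μ γ B := by
  have hbound := abs_ABTerm_le (γ := γ) hb hθ0.le hθ1 hμ1 ht0 htT hη hB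
  have hsum := (summable_C1term (γ := γ) hθ0 hθ1 hμ1 (by linarith : 0 ≤ T - t0)).mul_left
    (B / b)
  have habs : Summable fun i => |ABTerm t0 b θ μ γ η t i| :=
    hsum.of_nonneg_of_le (fun _ => abs_nonneg _) hbound
  calc |ABIntegral t0 b θ μ γ η t| ≤ ∑' i, |ABTerm t0 b θ μ γ η t i| :=
        norm_tsum_le_tsum_norm (f := ABTerm t0 b θ μ γ η t) habs
    _ ≤ ∑' i, B / b * C1term θ μ γ (T - t0) i := habs.tsum_le_tsum hbound hsum
    _ = C1const t0 T b θ μ γ B := tsum_mul_left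

end ABIntegralBounds

theorem upsilon_contraction_estimate_mu_ne_one_general
    (t0 T θ μ γ b A x0 : ℝ) (hθ0 : 0 < θ) (hθ1 : θ < 1)
    (hμ1 : μ < 1) (hb : 0 < b) (hA : 0 < A)
    (f : ℝ → ℝ → ℝ)
    (hfc : ContinuousOn (fun p : ℝ × ℝ => f p.1 p.2) (Set.Icc t0 T ×ˢ Set.univ))
    (hLip : ∀ t ∈ Set.Icc t0 T, ∀ y1 y2 : ℝ, |f t y1 - f t y2| ≤ A * |y1 - y2|)
    (x1 x2 : ℝ → ℝ)
    (h1c : ContinuousOn x1 (Set.Icc t0 T))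
    (h2c : ContinuousOn x2 (Set.Icc t0 T)) :
    ∀ t ∈ Set.Icc t0 T,
      |(x0 + ABIntegral t0 b θ μ γ (fun s => f s (x1 s)) t) -
        (x0 + ABIntegral t0 b θ μ γ (fun s => f s (x2 s)) t)| ≤
      C1const t0 T b θ μ γ A * sSup ((fun s => |x1 s - x2 s|) '' Set.Icc t0 T) := by
  rintro t ⟨ht0, htT⟩
  set M := sSup ((fun s => |x1 s - x2 s|) '' Icc t0 T)
  have hsub : Icc t0 t ⊆ Icc t0 T := Icc_subset_Icc_right htT
  have hM : ∀ s ∈ Icc t0 T, |x1 s - x2 s| ≤ M := fun s hs =>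
    le_csSup (isCompact_Icc.bddAbove_image (h1c.sub h2c).abs) (mem_image_of_mem _ hs)
  have hfx : ∀ x : ℝ → ℝ, ContinuousOn x (Icc t0 T) →
      ContinuousOn (fun s => f s (x s)) (Icc t0 t) := fun x hx =>
    (hfc.comp (continuousOn_id.prodMk hx) fun s hs => ⟨hs, mem_univ _⟩).mono hsub
  have hC1 : C1const t0 T b θ μ γ A * M = C1const t0 T b θ μ γ (A * M) := by
    simp only [C1const]; ring
  rw [add_sub_add_left_eq_sub, ABIntegral_sub hb hθ0 hθ1 hμ1 ht0 (hfx x1 h1c) (hfx x2 h2c), hC1]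
  exact abs_ABIntegral_le hb hθ0 hθ1 hμ1 ht0 htT ((hfx x1 h1c).sub (hfx x2 h2c)) fun s hs =>
    (hLip s (hsub hs) _ _).trans (mul_le_mul_of_nonneg_left (hM s (hsub hs)) hA.le)

/-- Contraction estimate for the operator `Υ`, case `μ ≠ 1`. -/
theorem upsilon_contraction_estimate_mu_ne_one
    (t0 T θ μ γ b A x0 : ℝ) (htT : t0 < T) (hθ0 : 0 < θ) (hθ1 : θ < 1)
    (hμ0 : 0 < μ) (hμ1 : μ < 1) (hγ : 0 < γ) (hb : 0 < b) (hA : 0 < A)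
    (f : ℝ → ℝ → ℝ)
    (hfc : ContinuousOn (fun p : ℝ × ℝ => f p.1 p.2) (Set.Icc t0 T ×ˢ Set.univ))
    (hLip : ∀ t ∈ Set.Icc t0 T, ∀ y1 y2 : ℝ, |f t y1 - f t y2| ≤ A * |y1 - y2|)
    (x1 x2 : ℝ → ℝ)
    (h1c : ContinuousOn x1 (Set.Icc t0 T))
    (h2c : ContinuousOn x2 (Set.Icc t0 T)) :
    ∀ t ∈ Set.Icc t0 T,
      |(x0 + ABIntegral t0 b θ μ γ (fun s => f s (x1 s)) t) -
        (x0 + ABIntegral t0 b θ μ γ (fun s => f s (x2 s)) t)| ≤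
      C1const t0 T b θ μ γ A * sSup ((fun s => |x1 s - x2 s|) '' Set.Icc t0 T) :=
  upsilon_contraction_estimate_mu_ne_one_general t0 T θ μ γ b A x0 hθ0 hθ1 hμ1 hb hA f hfc hLip x1
    x2 h1c h2c
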